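/- Let E be a closed subset of the unit sphere S of C^n satisfying Σ_s for some s < n: σ(B(x,R) ∩ E_ε) ≤ C R^s ε^{n-s} for all x ∈ S, R > 0, 0 < ε < R. Then (E,d) ∈ Υ_s, i.e. the maximal number N of R-separated points of E in a ball B(x,kR) satisfies N ≤ C' k^s for 0 < R ≤ kR ≤ 1. -/

import Mathlib

/-!
Since `1 - ⟪z, x⟫ = (1 - ⟪z, y⟫) + (1 - ⟪y, x⟫) - ⟪z - y, x - y⟫` and `‖x - y‖² ≤ 2 d(x, y)` on the
sphere, `d` satisfies the quasi-triangle inequality `d(x, z) ≤ 2 (d(x, y) + d(y, z))`.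
Hence the `d`-balls of radius `R / 4` around `R`-separated points of `E ∩ B(x, kR)` are disjoint,
lie in `B(x, 3kR) ∩ E_{R/4}`, and each has measure `≳ R^n`. Comparing with `Σ_s` gives
`N R^n ≲ (kR)^s R^(n-s)`, that is `N ≲ k^s`.
-/

open MeasureTheory

noncomputable def dNI {n : ℕ} (x y : EuclideanSpace ℂ (Fin n)) : ℝ :=
  ‖1 - (inner ℂ y x : ℂ)‖

/-- Nonisotropic distance from `z` to the set `E`. -/
noncomputable def dE {n : ℕ} (E : Set (EuclideanSpace ℂ (Fin n)))
    (z : EuclideanSpace ℂ (Fin n)) : ℝ :=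
  sInf (dNI z '' E)

/-- The `d`-ball of center `x` and radius `r` inside the unit sphere. -/
def Sball {n : ℕ} (x : EuclideanSpace ℂ (Fin n)) (r : ℝ) :
    Set (EuclideanSpace ℂ (Fin n)) :=
  {z | ‖z‖ = 1 ∧ dNI x z < r}

open scoped ENNReal ComplexInnerProductSpace

section Measure

variable {α ι : Type*} [MeasurableSpace α]

theorem card_mul_le_measure_biUnion (μ : Measure α) {T : Finset ι} {B : ι → Set α}
    (hB : ∀ i ∈ T, MeasurableSet (B i)) (hdisj : (T : Set ι).PairwiseDisjoint B) {m : ℝ≥0∞}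
    (hm : ∀ i ∈ T, m ≤ μ (B i)) : T.card * m ≤ μ (⋃ i ∈ T, B i) :=
  calc (T.card : ℝ≥0∞) * m = ∑ _i ∈ T, m := by rw [Finset.sum_const, nsmul_eq_mul]
    _ ≤ ∑ i ∈ T, μ (B i) := Finset.sum_le_sum hm
    _ = μ (⋃ i ∈ T, B i) := (measure_biUnion_finset hdisj hB).symm

end Measure

theorem le_mul_rpow_of_mul_le {N c₀ C s k R n : ℝ} (hc₀ : 0 < c₀) (hk : 0 < k) (hR : 0 < R)
    (h : N * (c₀ * (R / 4) ^ n) ≤ C * (3 * (k * R)) ^ s * (R / 4) ^ (n - s)) :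
    N ≤ C * 12 ^ s / c₀ * k ^ s := by
  have hρ : 0 < R / 4 := by positivity
  have hsplit : (3 * (k * R)) ^ s * (R / 4) ^ (n - s) = (12 * k) ^ s * (R / 4) ^ n := by
    rw [show 3 * (k * R) = 12 * k * (R / 4) by ring, Real.mul_rpow (by positivity) hρ.le,
      mul_assoc, ← Real.rpow_add hρ, add_sub_cancel]
  have hfactor : C * (3 * (k * R)) ^ s * (R / 4) ^ (n - s) =
      C * 12 ^ s / c₀ * k ^ s * (c₀ * (R / 4) ^ n) := by
    rw [mul_assoc, hsplit, Real.mul_rpow (by norm_num) hk.le]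
    field_simp
  exact le_of_mul_le_mul_right (h.trans_eq hfactor) (by positivity)

section Nonisotropic

variable {n : ℕ} {x y z : EuclideanSpace ℂ (Fin n)}

theorem dNI_nonneg (x y : EuclideanSpace ℂ (Fin n)) : 0 ≤ dNI x y :=
  norm_nonneg _

theorem dNI_comm (x y : EuclideanSpace ℂ (Fin n)) : dNI x y = dNI y x := by
  rw [dNI, dNI, ← Complex.norm_conj, map_sub, map_one, inner_conj_symm]

theorem continuous_dNI (x : EuclideanSpace ℂ (Fin n)) : Continuous (dNI x) :=
  (continuous_const.sub (continuous_id.inner continuous_const)).norm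

theorem norm_sub_sq_le_two_mul_dNI (hx : ‖x‖ = 1) (hy : ‖y‖ = 1) :
    ‖x - y‖ ^ 2 ≤ 2 * dNI x y := by
  have hre : 1 - (⟪x, y⟫).re ≤ dNI x y := by
    rw [dNI_comm, dNI]
    simpa using Complex.re_le_norm (1 - ⟪x, y⟫)
  rw [@norm_sub_sq ℂ, hx, hy]
  simp only [RCLike.re_to_complex]
  linarith

theorem one_sub_inner_eq (hy : ‖y‖ = 1) :
    1 - ⟪z, x⟫ = (1 - ⟪z, y⟫) + (1 - ⟪y, x⟫) - ⟪z - y, x - y⟫ := by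
  have hyy : ⟪y, y⟫ = (1 : ℂ) := by
    rw [inner_self_eq_norm_sq_to_K, hy]; norm_num
  rw [inner_sub_left, inner_sub_right, inner_sub_right, hyy]
  ring

theorem dNI_le_two_mul_add (hx : ‖x‖ = 1) (hy : ‖y‖ = 1) (hz : ‖z‖ = 1) :
    dNI x z ≤ 2 * (dNI x y + dNI y z) := by
  have hzy := norm_sub_sq_le_two_mul_dNI hz hy
  have hxy := norm_sub_sq_le_two_mul_dNI hx hy
  rw [dNI_comm z] at hzy
  calc dNI x z = ‖(1 - ⟪z, y⟫) + (1 - ⟪y, x⟫) - ⟪z - y, x - y⟫‖ := by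
        rw [dNI, one_sub_inner_eq hy]
    _ ≤ dNI y z + dNI x y + ‖z - y‖ * ‖x - y‖ :=
        (norm_sub_le _ _).trans (add_le_add (norm_add_le _ _) (norm_inner_le_norm _ _))
    _ ≤ 2 * (dNI x y + dNI y z) := by
        nlinarith [sq_nonneg (‖z - y‖ - ‖x - y‖)]

theorem measurableSet_Sball [MeasurableSpace (EuclideanSpace ℂ (Fin n))]
    [BorelSpace (EuclideanSpace ℂ (Fin n))] (x : EuclideanSpace ℂ (Fin n)) (r : ℝ) :
    MeasurableSet (Sball x r) :=
  (isClosed_eq continuous_norm continuous_const).measurableSet.inter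
    (isOpen_lt (continuous_dNI x) continuous_const).measurableSet

theorem dE_le_dNI {E : Set (EuclideanSpace ℂ (Fin n))} {p : EuclideanSpace ℂ (Fin n)}
    (hp : p ∈ E) (z : EuclideanSpace ℂ (Fin n)) : dE E z ≤ dNI z p :=
  csInf_le ⟨0, by rintro _ ⟨e, -, rfl⟩; exact dNI_nonneg z e⟩ ⟨p, hp, rfl⟩

theorem pairwiseDisjoint_Sball_of_separated {T : Set (EuclideanSpace ℂ (Fin n))} {R : ℝ}
    (hT : ∀ p ∈ T, ‖p‖ = 1) (hsep : ∀ p ∈ T, ∀ q ∈ T, p ≠ q → R ≤ dNI p q) :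
    T.PairwiseDisjoint fun p => Sball p (R / 4) := by
  intro p hp q hq hpq
  refine Set.disjoint_left.mpr fun z hzp hzq => ?_
  have hquasi := dNI_le_two_mul_add (hT p hp) hzp.1 (hT q hq)
  have hzq' : dNI z q < R / 4 := dNI_comm z q ▸ hzq.2
  linarith [hsep p hp q hq hpq, hzp.2]

theorem biUnion_Sball_subset {E T : Set (EuclideanSpace ℂ (Fin n))} (hES : E ⊆ Metric.sphere 0 1)
    (hx : ‖x‖ = 1) {r ρ : ℝ} (hρ : ρ ≤ r / 2) (hT : T ⊆ {p ∈ E | dNI x p < r}) :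
    ⋃ p ∈ T, Sball p ρ ⊆ Sball x (3 * r) ∩ {z | ‖z‖ = 1 ∧ dE E z < ρ} := by
  simp only [Set.iUnion_subset_iff]
  intro p hp z hz
  obtain ⟨hpE, hpx⟩ := hT hp
  have hquasi := dNI_le_two_mul_add hx (mem_sphere_zero_iff_norm.mp (hES hpE)) hz.1
  refine ⟨⟨hz.1, by linarith [hz.2]⟩, hz.1, ?_⟩
  calc dE E z ≤ dNI z p := dE_le_dNI hpE z
    _ = dNI p z := dNI_comm z p
    _ < ρ := hz.2

end Nonisotropic

theorem sigma_implies_upsilon_general (n : ℕ)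
    [MeasurableSpace (EuclideanSpace ℂ (Fin n))]
    [BorelSpace (EuclideanSpace ℂ (Fin n))]
    (E : Set (EuclideanSpace ℂ (Fin n)))
    (hES : E ⊆ Metric.sphere 0 1)
    (σ : Measure (EuclideanSpace ℂ (Fin n)))
    (c₀ : ℝ) (hc₀ : 0 < c₀)
    (hσlow : ∀ x : EuclideanSpace ℂ (Fin n), ‖x‖ = 1 → ∀ r : ℝ, 0 < r → r ≤ 1 →
      ENNReal.ofReal (c₀ * r ^ (n : ℝ)) ≤ σ (Sball x r))
    (s C : ℝ) (hC : 0 < C)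
    -- E satisfies Σ_s :
    (hSig : ∀ x : EuclideanSpace ℂ (Fin n), ‖x‖ = 1 → ∀ R ε : ℝ, 0 < ε → ε < R →
      σ (Sball x R ∩ {z | ‖z‖ = 1 ∧ dE E z < ε}) ≤
        ENNReal.ofReal (C * R ^ s * ε ^ ((n : ℝ) - s))) :
    -- conclusion : (E,d) ∈ Υ_s
    ∃ C' > 0, ∀ x ∈ E, ∀ (R k : ℝ), 0 < R → 1 ≤ k → k * R ≤ 1 →
      ∀ T : Finset (EuclideanSpace ℂ (Fin n)),
        (↑T ⊆ {z ∈ E | dNI x z < k * R}) →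
        (∀ p ∈ T, ∀ q ∈ T, p ≠ q → R ≤ dNI p q) →
        (T.card : ℝ) ≤ C' * k ^ s := by
  refine ⟨C * 12 ^ s / c₀, by positivity, fun x hxE R k hR hk hkR T hT hsep => ?_⟩
  have hS : ∀ p ∈ E, ‖p‖ = 1 := fun p hp => mem_sphere_zero_iff_norm.mp (hES hp)
  have hTS : ∀ p ∈ (T : Set _), ‖p‖ = 1 := fun p hp => hS p (hT hp).1
  have hRk : R ≤ k * R := le_mul_of_one_le_left hR.le hk
  have hmeasure : ENNReal.ofReal (T.card * (c₀ * (R / 4) ^ (n : ℝ))) ≤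
      ENNReal.ofReal (C * (3 * (k * R)) ^ s * (R / 4) ^ ((n : ℝ) - s)) := by
    rw [ENNReal.ofReal_mul (by positivity), ENNReal.ofReal_natCast]
    calc _ ≤ σ (⋃ p ∈ T, Sball p (R / 4)) :=
          card_mul_le_measure_biUnion σ (fun p _ => measurableSet_Sball p _)
            (pairwiseDisjoint_Sball_of_separated hTS hsep)
            (fun p hp => hσlow p (hTS p hp) _ (by positivity) (by linarith))
      _ ≤ σ (Sball x (3 * (k * R)) ∩ {z | ‖z‖ = 1 ∧ dE E z < R / 4}) :=
          measure_mono (biUnion_Sball_subset hES (hS x hxE) (by linarith) hT)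
      _ ≤ _ := hSig x (hS x hxE) _ _ (by positivity) (by linarith)
  exact le_mul_rpow_of_mul_le hc₀ (by linarith) hR
    ((ENNReal.ofReal_le_ofReal_iff (by positivity)).mp hmeasure)

theorem sigma_implies_upsilon (n : ℕ)
    [MeasurableSpace (EuclideanSpace ℂ (Fin n))]
    [BorelSpace (EuclideanSpace ℂ (Fin n))]
    (E : Set (EuclideanSpace ℂ (Fin n)))
    (hEclosed : IsClosed E) (hES : E ⊆ Metric.sphere 0 1) (hEne : E.Nonempty)
    (σ : Measure (EuclideanSpace ℂ (Fin n)))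
    (c₀ C₀ : ℝ) (hc₀ : 0 < c₀) (hC₀ : 0 < C₀)
    (hσlow : ∀ x : EuclideanSpace ℂ (Fin n), ‖x‖ = 1 → ∀ r : ℝ, 0 < r → r ≤ 1 →
      ENNReal.ofReal (c₀ * r ^ (n : ℝ)) ≤ σ (Sball x r))
    (hσup : ∀ x : EuclideanSpace ℂ (Fin n), ‖x‖ = 1 → ∀ r : ℝ, 0 < r →
      σ (Sball x r) ≤ ENNReal.ofReal (C₀ * r ^ (n : ℝ)))
    (s C : ℝ) (hs : s < n) (hC : 0 < C)
    -- E satisfies Σ_s :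
    (hSig : ∀ x : EuclideanSpace ℂ (Fin n), ‖x‖ = 1 → ∀ R ε : ℝ, 0 < ε → ε < R →
      σ (Sball x R ∩ {z | ‖z‖ = 1 ∧ dE E z < ε}) ≤
        ENNReal.ofReal (C * R ^ s * ε ^ ((n : ℝ) - s))) :
    -- conclusion : (E,d) ∈ Υ_s
    ∃ C' > 0, ∀ x ∈ E, ∀ (R k : ℝ), 0 < R → 1 ≤ k → k * R ≤ 1 →
      ∀ T : Finset (EuclideanSpace ℂ (Fin n)),
        (↑T ⊆ {z ∈ E | dNI x z < k * R}) →
        (∀ p ∈ T, ∀ q ∈ T, p ≠ q → R ≤ dNI p q) →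
        (T.card : ℝ) ≤ C' * k ^ s :=
  sigma_implies_upsilon_general n E hES σ c₀ hc₀ hσlow s C hC hSig
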